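/- arXiv:2405.00058 — 2 statements merged into one kernel-verified Lean document; each statement's English description precedes it below -/
import Mathlib

section
/- Optimality of the Kalman gain: with P positive semidefinite and S = H P Hᵀ + R positive definite, the map K ↦ trace((I − K H) P (I − K H)ᵀ + K R Kᵀ) over n×m matrices K attains its minimum at K* = P Hᵀ S⁻¹. -/
/-!
Completing the square: if `K₀ S = P Hᵀ` with `S = H P Hᵀ + R`, then the Joseph-form covariance
splits as `(P - K₀ S K₀ᵀ) + (K - K₀) S (K - K₀)ᵀ`, whose first summand does not depend on `K`
and whose second is positive semidefinite and vanishes at `K = K₀`.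
-/

open Matrix

theorem Matrix.joseph_eq_sub_add_mul_mul_transpose {α n m : Type*} [CommRing α]
    [Fintype n] [DecidableEq n] [Fintype m]
    {P : Matrix n n α} {R S : Matrix m m α} {H : Matrix m n α} {K₀ : Matrix n m α}
    (hP : Pᵀ = P) (hS : Sᵀ = S) (hR : R = S - H * P * Hᵀ) (hK₀ : K₀ * S = P * Hᵀ)
    (K : Matrix n m α) :
    (1 - K * H) * P * (1 - K * H)ᵀ + K * R * Kᵀ
      = (P - K₀ * S * K₀ᵀ) + (K - K₀) * S * (K - K₀)ᵀ := by
  have hK₀' : S * K₀ᵀ = H * P := by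
    simpa only [transpose_mul, transpose_transpose, hP, hS] using congrArg transpose hK₀
  have hKSK₀ : K * S * K₀ᵀ = K * H * P := by rw [Matrix.mul_assoc, hK₀', ← Matrix.mul_assoc]
  have hK₀SK : K₀ * S * Kᵀ = P * Hᵀ * Kᵀ := by rw [hK₀]
  subst hR
  simp only [transpose_sub, transpose_mul, transpose_one, Matrix.sub_mul, Matrix.mul_sub,
    Matrix.one_mul, Matrix.mul_one, ← Matrix.mul_assoc, hKSK₀, hK₀SK]
  abel

theorem Matrix.trace_joseph_le {n m : Type*} [Fintype n] [DecidableEq n] [Fintype m]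
    {P : Matrix n n ℝ} {R S : Matrix m m ℝ} {H : Matrix m n ℝ} {K₀ : Matrix n m ℝ}
    (hP : Pᵀ = P) (hS : S.PosSemidef) (hR : R = S - H * P * Hᵀ) (hK₀ : K₀ * S = P * Hᵀ)
    (K : Matrix n m ℝ) :
    ((1 - K₀ * H) * P * (1 - K₀ * H)ᵀ + K₀ * R * K₀ᵀ).trace
      ≤ ((1 - K * H) * P * (1 - K * H)ᵀ + K * R * Kᵀ).trace := by
  have hSt : Sᵀ = S := (isHermitian_iff_isSymm.mp hS.isHermitian).eq
  rw [joseph_eq_sub_add_mul_mul_transpose hP hSt hR hK₀ K,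
    joseph_eq_sub_add_mul_mul_transpose hP hSt hR hK₀ K₀, sub_self, Matrix.zero_mul,
    Matrix.zero_mul, add_zero, trace_add, le_add_iff_nonneg_right]
  simpa only [conjTranspose_eq_transpose_of_trivial] using
    (hS.mul_mul_conjTranspose_same (K - K₀)).trace_nonneg

theorem kalman_gain_optimal_general {n m : ℕ}
    (P : Matrix (Fin n) (Fin n) ℝ) (R : Matrix (Fin m) (Fin m) ℝ)
    (H : Matrix (Fin m) (Fin n) ℝ)
    (hP : P.PosSemidef)
    (hS : (H * P * Hᵀ + R).PosDef) :
    ∀ K : Matrix (Fin n) (Fin m) ℝ,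
      ((1 - P * Hᵀ * (H * P * Hᵀ + R)⁻¹ * H) * P * (1 - P * Hᵀ * (H * P * Hᵀ + R)⁻¹ * H)ᵀ
          + (P * Hᵀ * (H * P * Hᵀ + R)⁻¹) * R * (P * Hᵀ * (H * P * Hᵀ + R)⁻¹)ᵀ).trace
        ≤ ((1 - K * H) * P * (1 - K * H)ᵀ + K * R * Kᵀ).trace := by
  exact trace_joseph_le (isHermitian_iff_isSymm.mp hP.isHermitian).eq hS.posSemidef
    (add_sub_cancel_left _ _).symm (nonsing_inv_mul_cancel_right _ _ hS.det_pos.ne'.isUnit)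

/-- Optimality of the Kalman gain: with `P` positive semidefinite and
`S = H P Hᵀ + R` positive definite, the map
`K ↦ trace((I − K H) P (I − K H)ᵀ + K R Kᵀ)` attains its minimum at `K* = P Hᵀ S⁻¹`. -/
theorem kalman_gain_optimal {n m : ℕ}
    (P : Matrix (Fin n) (Fin n) ℝ) (R : Matrix (Fin m) (Fin m) ℝ)
    (H : Matrix (Fin m) (Fin n) ℝ)
    (hP : P.PosSemidef) (hR : R.PosSemidef)
    (hS : (H * P * Hᵀ + R).PosDef) :
    ∀ K : Matrix (Fin n) (Fin m) ℝ,
      ((1 - P * Hᵀ * (H * P * Hᵀ + R)⁻¹ * H) * P * (1 - P * Hᵀ * (H * P * Hᵀ + R)⁻¹ * H)ᵀ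
          + (P * Hᵀ * (H * P * Hᵀ + R)⁻¹) * R * (P * Hᵀ * (H * P * Hᵀ + R)⁻¹)ᵀ).trace
        ≤ ((1 - K * H) * P * (1 - K * H)ᵀ + K * R * Kᵀ).trace :=
  kalman_gain_optimal_general P R H hP hS
end

section
/- Best linear unbiased estimate of the optimal gain form: among affine estimators x̂⁺ = x̂⁻ + K(z − H x̂⁻), the choice K = P Hᵀ (H P Hᵀ + R)⁻¹ minimizes E[‖e⁺‖²] whenever e⁻ has covariance P, v has covariance R, they are uncorrelated, and H P Hᵀ + R is positive definite — regardless of the distributions of e⁻ and v. -/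
/-!
Expanding the square, `E‖A e + B v‖² = tr (A P Aᵀ + B R Bᵀ)` for deterministic `A`, `B`, since
`e` and `v` are centred and uncorrelated; so the mean-square error of the gain `K` is the trace of
the Joseph-form covariance `J(K) = (I − K H) P (I − K H)ᵀ + K R Kᵀ`, whatever the distributions.
Completing the square in `K` with `S = H P Hᵀ + R` gives `J(K) = J(K*) + (K − K*) S (K − K*)ᵀ`
for `K* = P Hᵀ S⁻¹`, and the last term has nonnegative trace because `S` is positive definite.
-/

open MeasureTheory ProbabilityTheory Matrix

/-- The mean (componentwise expectation) of a random vector. -/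
noncomputable def rvMean {k : ℕ} {Ω : Type*} [MeasurableSpace Ω]
    (μ : Measure Ω) (X : Ω → Fin k → ℝ) : Fin k → ℝ :=
  ∫ ω, X ω ∂μ

/-- The covariance matrix `E[(X − E X)(X − E X)ᵀ]` of a random vector. -/
noncomputable def rvCov {k : ℕ} {Ω : Type*} [MeasurableSpace Ω]
    (μ : Measure Ω) (X : Ω → Fin k → ℝ) : Matrix (Fin k) (Fin k) ℝ :=
  Matrix.of fun i j => ∫ ω, (X ω i - rvMean μ X i) * (X ω j - rvMean μ X j) ∂μ

namespace Matrix

lemma trace_mul_mul_transpose {m n 𝕜 : Type*} [Fintype m] [Fintype n] [CommSemiring 𝕜]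
    (A : Matrix m n 𝕜) (M : Matrix n n 𝕜) : trace (A * M * Aᵀ) = ∑ i, A i ⬝ᵥ (M *ᵥ A i) := by
  simp only [trace, diag, mul_apply, transpose_apply, dotProduct, mulVec, Finset.mul_sum,
    Finset.sum_mul]
  refine Finset.sum_congr rfl fun i _ => ?_
  rw [Finset.sum_comm]
  exact Finset.sum_congr rfl fun j _ => Finset.sum_congr rfl fun k _ => by ring

variable {n m 𝕜 : Type*} [Fintype n] [Fintype m] [DecidableEq n]

def josephCov [CommRing 𝕜] (K : Matrix n m 𝕜) (H : Matrix m n 𝕜) (P : Matrix n n 𝕜)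
    (Q : Matrix m m 𝕜) : Matrix n n 𝕜 :=
  (1 - K * H) * P * (1 - K * H)ᵀ + K * Q * Kᵀ

noncomputable def kalmanGain [CommRing 𝕜] [DecidableEq m] (H : Matrix m n 𝕜)
    (P : Matrix n n 𝕜) (Q : Matrix m m 𝕜) : Matrix n m 𝕜 :=
  P * Hᵀ * (H * P * Hᵀ + Q)⁻¹

lemma josephCov_eq [CommRing 𝕜] (K : Matrix n m 𝕜) (H : Matrix m n 𝕜) (P : Matrix n n 𝕜)
    (Q : Matrix m m 𝕜) :
    josephCov K H P Q = P - K * (H * P) - P * Hᵀ * Kᵀ + K * (H * P * Hᵀ + Q) * Kᵀ := by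
  simp only [josephCov, transpose_sub, transpose_one, transpose_mul, Matrix.mul_add,
    Matrix.add_mul, Matrix.sub_mul, Matrix.mul_sub, Matrix.one_mul, Matrix.mul_one,
    Matrix.mul_assoc]
  abel

lemma josephCov_eq_josephCov_kalmanGain_add [CommRing 𝕜] [DecidableEq m] {H : Matrix m n 𝕜}
    {P : Matrix n n 𝕜} {Q : Matrix m m 𝕜} (hP : P.IsSymm) (hS : (H * P * Hᵀ + Q).IsSymm)
    (hS_det : IsUnit (H * P * Hᵀ + Q).det) (K : Matrix n m 𝕜) :
    josephCov K H P Q = josephCov (kalmanGain H P Q) H P Q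
      + (K - kalmanGain H P Q) * (H * P * Hᵀ + Q) * (K - kalmanGain H P Q)ᵀ := by
  rw [josephCov_eq, josephCov_eq]
  set S := H * P * Hᵀ + Q
  set G := kalmanGain H P Q
  have hGS : G * S = P * Hᵀ := by
    rw [show G = P * Hᵀ * S⁻¹ from rfl, Matrix.mul_assoc, nonsing_inv_mul S hS_det,
      Matrix.mul_one]
  have hSG : S * Gᵀ = H * P := by
    rw [show G = P * Hᵀ * S⁻¹ from rfl, transpose_mul, transpose_mul, transpose_nonsing_inv,
      hS.eq, hP.eq, transpose_transpose, ← Matrix.mul_assoc, mul_nonsing_inv S hS_det,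
      Matrix.one_mul]
  -- Now only `K`, `G`, `S`, `P` occur, and both sides expand to the same sum of products.
  rw [← hGS, ← hSG]
  clear_value S G
  simp only [transpose_sub, Matrix.sub_mul, Matrix.mul_sub, Matrix.mul_assoc]
  abel

lemma trace_josephCov_kalmanGain_le [DecidableEq m] {H : Matrix m n ℝ} {P : Matrix n n ℝ}
    {Q : Matrix m m ℝ} (hP : P.IsSymm) (hS : (H * P * Hᵀ + Q).PosDef) (K : Matrix n m ℝ) :
    (josephCov (kalmanGain H P Q) H P Q).trace ≤ (josephCov K H P Q).trace := by
  rw [josephCov_eq_josephCov_kalmanGain_add hP (isHermitian_iff_isSymm.mp hS.isHermitian)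
    hS.det_pos.ne'.isUnit K, trace_add, le_add_iff_nonneg_right]
  simpa using (hS.posSemidef.mul_mul_conjTranspose_same (K - kalmanGain H P Q)).trace_nonneg

end Matrix

namespace ProbabilityTheory

variable {Ω ι κ : Type*} [MeasurableSpace Ω] {μ : Measure Ω}

noncomputable def secondMoment (μ : Measure Ω) (X : Ω → ι → ℝ) : Matrix ι ι ℝ :=
  Matrix.of fun i j => ∫ ω, X ω i * X ω j ∂μ

lemma secondMoment_isSymm (X : Ω → ι → ℝ) : (secondMoment μ X).IsSymm := by
  ext i j
  simp only [secondMoment, transpose_apply, of_apply, mul_comm]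

lemma rvCov_eq_secondMoment {k : ℕ} {X : Ω → Fin k → ℝ} (hX : rvMean μ X = 0) :
    rvCov μ X = secondMoment μ X := by
  simp [rvCov, secondMoment, hX]

lemma secondMoment_sumElim {X : Ω → ι → ℝ} {Y : Ω → κ → ℝ}
    (hXY : ∀ i j, ∫ ω, X ω i * Y ω j ∂μ = 0) :
    secondMoment μ (fun ω => Sum.elim (X ω) (Y ω))
      = fromBlocks (secondMoment μ X) 0 0 (secondMoment μ Y) := by
  ext (i | i) (j | j)
  · rfl
  · exact hXY i j
  · simpa [secondMoment, mul_comm] using hXY j i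
  · rfl

variable [Fintype ι]

lemma memLp_dotProduct {X : Ω → ι → ℝ} (hX : ∀ i, MemLp (fun ω => X ω i) 2 μ) (c : ι → ℝ) :
    MemLp (fun ω => c ⬝ᵥ X ω) 2 μ :=
  memLp_finsetSum Finset.univ fun i _ => (hX i).const_mul (c i)

lemma integral_dotProduct_sq {X : Ω → ι → ℝ} (hX : ∀ i, MemLp (fun ω => X ω i) 2 μ)
    (c : ι → ℝ) : ∫ ω, (c ⬝ᵥ X ω) ^ 2 ∂μ = c ⬝ᵥ (secondMoment μ X *ᵥ c) := by
  have hint : ∀ i j, Integrable (fun ω => c i * c j * (X ω i * X ω j)) μ := fun i j =>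
    ((hX i).integrable_mul (hX j)).const_mul _
  have hsq : ∀ ω, (c ⬝ᵥ X ω) ^ 2 = ∑ i, ∑ j, c i * c j * (X ω i * X ω j) := by
    intro ω
    simp only [sq, dotProduct, Finset.sum_mul_sum]
    exact Finset.sum_congr rfl fun i _ => Finset.sum_congr rfl fun j _ => by ring
  simp_rw [hsq]
  rw [integral_finsetSum _ fun i _ => integrable_finsetSum _ fun j _ => hint i j]
  simp_rw [integral_finsetSum _ fun j _ => hint _ j, integral_const_mul]
  simp only [dotProduct, mulVec, secondMoment, of_apply, Finset.mul_sum]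
  exact Finset.sum_congr rfl fun i _ => Finset.sum_congr rfl fun j _ => by ring

lemma integral_norm_mulVec_sq {m : Type*} [Fintype m] {X : Ω → ι → ℝ}
    (hX : ∀ i, MemLp (fun ω => X ω i) 2 μ) (A : Matrix m ι ℝ) :
    ∫ ω, ‖WithLp.toLp 2 (A *ᵥ X ω)‖ ^ 2 ∂μ = trace (A * secondMoment μ X * Aᵀ) := by
  have hsq : ∀ i, Integrable (fun ω => (A *ᵥ X ω) i ^ 2) μ := fun i =>
    (memLp_dotProduct hX (A i)).integrable_sq
  simp_rw [EuclideanSpace.norm_sq_eq, Real.norm_eq_abs, sq_abs]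
  rw [integral_finsetSum _ fun i _ => hsq i, trace_mul_mul_transpose]
  exact Finset.sum_congr rfl fun i _ => integral_dotProduct_sq hX (A i)

lemma integral_norm_mulVec_add_mulVec_sq [Fintype κ] {m : Type*} [Fintype m] {X : Ω → ι → ℝ}
    {Y : Ω → κ → ℝ} (hX : ∀ i, MemLp (fun ω => X ω i) 2 μ) (hY : ∀ j, MemLp (fun ω => Y ω j) 2 μ)
    (hXY : ∀ i j, ∫ ω, X ω i * Y ω j ∂μ = 0) (A : Matrix m ι ℝ) (B : Matrix m κ ℝ) :
    ∫ ω, ‖WithLp.toLp 2 (A *ᵥ X ω + B *ᵥ Y ω)‖ ^ 2 ∂μ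
      = trace (A * secondMoment μ X * Aᵀ + B * secondMoment μ Y * Bᵀ) := by
  have hXY_memLp : ∀ t, MemLp (fun ω => Sum.elim (X ω) (Y ω) t) 2 μ := by
    rintro (i | j)
    exacts [hX i, hY j]
  simp_rw [← fromCols_mulVec_sumElim]
  rw [integral_norm_mulVec_sq hXY_memLp, secondMoment_sumElim hXY, transpose_fromCols,
    fromCols_mul_fromBlocks, fromCols_mul_fromRows]
  simp

end ProbabilityTheory

theorem optimal_gain_minimizes_mse_general {n m : ℕ} {Ω : Type*} [MeasurableSpace Ω]
    (μ : Measure Ω)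
    (e : Ω → Fin n → ℝ) (v : Ω → Fin m → ℝ)
    (H : Matrix (Fin m) (Fin n) ℝ)
    (P : Matrix (Fin n) (Fin n) ℝ) (R : Matrix (Fin m) (Fin m) ℝ)
    (he2 : MemLp e 2 μ) (hv2 : MemLp v 2 μ)
    (hme : rvMean μ e = 0) (hce : rvCov μ e = P)
    (hmv : rvMean μ v = 0) (hcv : rvCov μ v = R)
    (huncorr : ∀ i j, ∫ ω, e ω i * v ω j ∂μ = 0)
    (hS : (H * P * Hᵀ + R).PosDef) :
    ∀ K : Matrix (Fin n) (Fin m) ℝ,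
      ∫ ω, ‖(WithLp.equiv 2 (Fin n → ℝ)).symm
              ((1 - (P * Hᵀ * (H * P * Hᵀ + R)⁻¹) * H).mulVec (e ω)
                + (P * Hᵀ * (H * P * Hᵀ + R)⁻¹).mulVec (v ω))‖ ^ 2 ∂μ
        ≤ ∫ ω, ‖(WithLp.equiv 2 (Fin n → ℝ)).symm
              ((1 - K * H).mulVec (e ω) + K.mulVec (v ω))‖ ^ 2 ∂μ := by
  intro K
  have hP : P = secondMoment μ e := hce ▸ rvCov_eq_secondMoment hme
  have hR : R = secondMoment μ v := hcv ▸ rvCov_eq_secondMoment hmv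
  have hmse : ∀ K : Matrix (Fin n) (Fin m) ℝ,
      ∫ ω, ‖(WithLp.equiv 2 (Fin n → ℝ)).symm ((1 - K * H) *ᵥ e ω + K *ᵥ v ω)‖ ^ 2 ∂μ
        = (josephCov K H P R).trace := fun K => by
    rw [hP, hR]
    exact integral_norm_mulVec_add_mulVec_sq he2.eval hv2.eval huncorr _ _
  rw [hmse K]
  exact (hmse (kalmanGain H P R)).trans_le
    (trace_josephCov_kalmanGain_le (hP ▸ secondMoment_isSymm e) hS K)

/-- Best linear unbiased estimate: among affine estimators `x̂⁺ = x̂⁻ + K (z − H x̂⁻)`,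
i.e. among updated errors `e⁺ = (I − K H) e⁻ + K v`, the choice
`K* = P Hᵀ (H P Hᵀ + R)⁻¹` minimizes `E[‖e⁺‖²]` (Euclidean norm) whenever `e⁻` has
covariance `P`, `v` has covariance `R`, they are uncorrelated, and `H P Hᵀ + R` is
positive definite — regardless of the distributions of `e⁻` and `v`. -/
theorem optimal_gain_minimizes_mse {n m : ℕ} {Ω : Type*} [MeasurableSpace Ω]
    (μ : Measure Ω) [IsProbabilityMeasure μ]
    (e : Ω → Fin n → ℝ) (v : Ω → Fin m → ℝ)
    (H : Matrix (Fin m) (Fin n) ℝ)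
    (P : Matrix (Fin n) (Fin n) ℝ) (R : Matrix (Fin m) (Fin m) ℝ)
    (he2 : MemLp e 2 μ) (hv2 : MemLp v 2 μ)
    (hme : rvMean μ e = 0) (hce : rvCov μ e = P)
    (hmv : rvMean μ v = 0) (hcv : rvCov μ v = R)
    (huncorr : ∀ i j, ∫ ω, e ω i * v ω j ∂μ = 0)
    (hS : (H * P * Hᵀ + R).PosDef) :
    ∀ K : Matrix (Fin n) (Fin m) ℝ,
      ∫ ω, ‖(WithLp.equiv 2 (Fin n → ℝ)).symm
              ((1 - (P * Hᵀ * (H * P * Hᵀ + R)⁻¹) * H).mulVec (e ω)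
                + (P * Hᵀ * (H * P * Hᵀ + R)⁻¹).mulVec (v ω))‖ ^ 2 ∂μ
        ≤ ∫ ω, ‖(WithLp.equiv 2 (Fin n → ℝ)).symm
              ((1 - K * H).mulVec (e ω) + K.mulVec (v ω))‖ ^ 2 ∂μ :=
  optimal_gain_minimizes_mse_general μ e v H P R he2 hv2 hme hce hmv hcv huncorr hS
end
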